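/- The 2-token graph of the complete bipartite graph K_{n,n} has spectral radius 2√(n(n−1)). -/

import Mathlib

/-!
Split the 2-subsets of the vertex set of `K_{n,n}` by the parity of the number of tokens on the
left side. Moving one token along an edge changes that number by one, so the 2-token graph is
bipartite for this split; a pair on one side has degree `2n`, a pair meeting both sides has degree
`2(n - 1)`. For a biregular graph with degrees `d₁, d₂`, the vector `(√(deg u))ᵤ` is an eigenvector
for `√(d₁ d₂)`, and every eigenvalue `μ` satisfies `μ² ≤ d₁ d₂` by Gershgorin's theorem applied to
`A²`, whose row sums `∑_{w ∼ u} deg w` all equal `d₁ d₂`.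
-/

open Finset
open scoped Classical

def tokenGraph {V : Type*} [DecidableEq V] (G : SimpleGraph V) (k : ℕ) :
    SimpleGraph {s : Finset V // s.card = k} where
  Adj A B := ∃ a b, G.Adj a b ∧ A.1 \ B.1 = {a} ∧ B.1 \ A.1 = {b}
  symm := by
    constructor
    rintro A B ⟨a, b, h, h1, h2⟩
    exact ⟨b, a, h.symm, h2, h1⟩
  loopless := by
    constructor
    rintro A ⟨a, b, h, h1, h2⟩
    rw [Finset.sdiff_self] at h1
    exact Finset.singleton_ne_empty a h1.symm

noncomputable def specRad {m : Type*} [Fintype m] (M : Matrix m m ℝ) : ℝ :=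
  sSup {μ : ℝ | ∃ v : m → ℝ, v ≠ 0 ∧ M.mulVec v = μ • v}

open Matrix

theorem Finset.sdiff_insert_erase {α : Type*} [DecidableEq α] {s : Finset α} {a b : α}
    (ha : a ∈ s) (hb : b ∉ s) : s \ insert b (s.erase a) = {a} := by
  ext x; simp only [mem_sdiff, mem_insert, mem_erase, mem_singleton]; grind

theorem Finset.insert_erase_sdiff {α : Type*} [DecidableEq α] {s : Finset α} {a b : α}
    (hb : b ∉ s) : insert b (s.erase a) \ s = {b} := by
  ext x; simp only [mem_sdiff, mem_insert, mem_erase, mem_singleton]; grind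

theorem Finset.card_insert_erase {α : Type*} [DecidableEq α] {s : Finset α} {a b : α}
    (ha : a ∈ s) (hb : b ∉ s) : #(insert b (s.erase a)) = #s := by
  rw [card_insert_of_notMem (fun h => hb (mem_of_mem_erase h)), card_erase_add_one ha]

theorem Matrix.eigenvalue_le_of_sum_abs_le {ι : Type*} [Fintype ι] [DecidableEq ι]
    {M : Matrix ι ι ℝ} {r : ℝ} (hr : ∀ i, ∑ j, |M i j| ≤ r) {v : ι → ℝ} (hv : v ≠ 0) {μ : ℝ}
    (h : M *ᵥ v = μ • v) : μ ≤ r := by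
  have hμ : Module.End.HasEigenvalue (toLin' M) μ :=
    Module.End.hasEigenvalue_of_hasEigenvector
      ⟨Module.End.mem_eigenspace_iff.2 (by rwa [toLin'_apply]), hv⟩
  obtain ⟨k, hk⟩ := eigenvalue_mem_ball hμ
  rw [Metric.mem_closedBall, Real.dist_eq] at hk
  simp only [Real.norm_eq_abs] at hk
  calc μ ≤ M k k + ∑ j ∈ univ.erase k, |M k j| := by linarith [le_abs_self (μ - M k k)]
    _ ≤ ∑ j, |M k j| := by
        rw [← add_sum_erase _ _ (mem_univ k)]; gcongr; exact le_abs_self _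
    _ ≤ r := hr k

theorem specRad_of_isEmpty {m : Type*} [Fintype m] [IsEmpty m] (M : Matrix m m ℝ) :
    specRad M = 0 := by
  have : {μ : ℝ | ∃ v : m → ℝ, v ≠ 0 ∧ M *ᵥ v = μ • v} = ∅ :=
    Set.eq_empty_of_forall_notMem fun _ ⟨v, hv, _⟩ => hv (Subsingleton.elim v 0)
  rw [specRad, this, Real.sSup_empty]

namespace SimpleGraph

variable {V : Type*} [Fintype V] (G : SimpleGraph V) [DecidableRel G.Adj]

theorem sq_le_of_mulVec_eq_smul [DecidableEq V] {r : ℝ}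
    (hr : ∀ u, ∑ w ∈ G.neighborFinset u, (G.degree w : ℝ) ≤ r)
    {v : V → ℝ} (hv : v ≠ 0) {μ : ℝ} (h : G.adjMatrix ℝ *ᵥ v = μ • v) : μ ^ 2 ≤ r := by
  set A := G.adjMatrix ℝ
  have hsq : (A * A) *ᵥ v = μ ^ 2 • v := by
    rw [← mulVec_mulVec, h, mulVec_smul, h, smul_smul, sq]
  refine eigenvalue_le_of_sum_abs_le (fun u => ?_) hv hsq
  calc ∑ w, |(A * A) u w| = (A *ᵥ (A *ᵥ fun _ => 1)) u := by
        rw [mulVec_mulVec]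
        simp only [mulVec, dotProduct, mul_one]
        exact sum_congr rfl fun w _ => abs_of_nonneg <| by
          rw [← sq, adjMatrix_pow_apply_eq_card_walk]; positivity
    _ = ∑ w ∈ G.neighborFinset u, (G.degree w : ℝ) := by
        simp [A, adjMatrix_mulVec_apply]
    _ ≤ r := hr u

structure IsBiregular (p : V → Prop) (d₁ d₂ : ℕ) : Prop where
  not_iff_of_adj : ∀ ⦃u w⦄, G.Adj u w → (¬ p w ↔ p u)
  degree_of_pos : ∀ u, p u → G.degree u = d₁
  degree_of_neg : ∀ u, ¬ p u → G.degree u = d₂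

namespace IsBiregular

variable {G} {p : V → Prop} {d₁ d₂ : ℕ}

theorem sum_neighborFinset_comp_degree (hG : G.IsBiregular p d₁ d₂) (g : ℕ → ℝ) (u : V) :
    ∑ w ∈ G.neighborFinset u, g (G.degree w) = if p u then d₁ * g d₂ else d₂ * g d₁ := by
  have hside : ∀ w ∈ G.neighborFinset u, ¬ p w ↔ p u := fun w hw =>
    hG.not_iff_of_adj ((mem_neighborFinset G u w).1 hw)
  split_ifs with hu
  · rw [sum_congr rfl fun w hw => by rw [hG.degree_of_neg w ((hside w hw).2 hu)], sum_const,
      card_neighborFinset_eq_degree, hG.degree_of_pos u hu, nsmul_eq_mul]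
  · rw [sum_congr rfl fun w hw => by rw [hG.degree_of_pos w ((not_iff_comm.1 (hside w hw)).1 hu)],
      sum_const, card_neighborFinset_eq_degree, hG.degree_of_neg u hu, nsmul_eq_mul]

theorem sum_neighborFinset_degree (hG : G.IsBiregular p d₁ d₂) (u : V) :
    ∑ w ∈ G.neighborFinset u, (G.degree w : ℝ) = d₁ * d₂ := by
  rw [hG.sum_neighborFinset_comp_degree (fun d => (d : ℝ))]
  split_ifs <;> ring

theorem adjMatrix_mulVec_sqrt_degree (hG : G.IsBiregular p d₁ d₂) :
    G.adjMatrix ℝ *ᵥ (fun u => √(G.degree u)) = √(d₁ * d₂) • fun u => √(G.degree u) := by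
  ext u
  rw [adjMatrix_mulVec_apply, hG.sum_neighborFinset_comp_degree (fun d => √d), Pi.smul_apply,
    smul_eq_mul, Real.sqrt_mul (Nat.cast_nonneg _)]
  split_ifs with hu
  · rw [hG.degree_of_pos u hu]
    nth_rw 1 [← Real.mul_self_sqrt (Nat.cast_nonneg d₁)]
    ring
  · rw [hG.degree_of_neg u hu]
    nth_rw 1 [← Real.mul_self_sqrt (Nat.cast_nonneg d₂)]
    ring

theorem degree_mul_degree_of_adj (hG : G.IsBiregular p d₁ d₂) {u w : V} (h : G.Adj u w) :
    G.degree u * G.degree w = d₁ * d₂ := by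
  by_cases hu : p u
  · rw [hG.degree_of_pos u hu, hG.degree_of_neg w ((hG.not_iff_of_adj h).2 hu)]
  · rw [hG.degree_of_neg u hu, hG.degree_of_pos w ((not_iff_comm.1 (hG.not_iff_of_adj h)).1 hu),
      mul_comm]

theorem degree_eq_zero_of_mul_eq_zero (hG : G.IsBiregular p d₁ d₂) (hd : d₁ * d₂ = 0) (u : V) :
    G.degree u = 0 := by
  by_contra hu
  obtain ⟨w, huw⟩ := (G.degree_pos_iff_exists_adj u).1 (Nat.pos_of_ne_zero hu)
  have hw : G.degree w ≠ 0 := ((G.degree_pos_iff_exists_adj w).2 ⟨u, huw.symm⟩).ne'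
  exact mul_ne_zero hu hw (hG.degree_mul_degree_of_adj huw ▸ hd)

theorem specRad_adjMatrix (hG : G.IsBiregular p d₁ d₂) [Nonempty V] :
    specRad (G.adjMatrix ℝ) = √(d₁ * d₂) := by
  refine IsGreatest.csSup_eq ⟨?_, ?_⟩
  · by_cases hd : d₁ * d₂ = 0
    · refine ⟨Function.const V 1, fun h => one_ne_zero (congrFun h (Classical.arbitrary V)), ?_⟩
      ext u
      rw [adjMatrix_mulVec_const_apply, hG.degree_eq_zero_of_mul_eq_zero hd u]
      simp [← Nat.cast_mul, hd]
    · refine ⟨_, fun h => ?_, hG.adjMatrix_mulVec_sqrt_degree⟩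
      obtain ⟨u⟩ := ‹Nonempty V›
      have hu : G.degree u ≠ 0 := by
        by_cases hpu : p u
        · rw [hG.degree_of_pos u hpu]; exact left_ne_zero_of_mul hd
        · rw [hG.degree_of_neg u hpu]; exact right_ne_zero_of_mul hd
      exact hu (by simpa using congrFun h u)
  · rintro μ ⟨v, hv, h⟩
    exact (le_abs_self μ).trans <| Real.abs_le_sqrt <|
      G.sq_le_of_mulVec_eq_smul (fun u => (hG.sum_neighborFinset_degree u).le) hv h

end IsBiregular

end SimpleGraph

namespace SimpleGraph

variable {V : Type*} [DecidableEq V] (G : SimpleGraph V) {k : ℕ}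

theorem tokenGraph_adj_iff {A B : {s : Finset V // #s = k}} :
    (tokenGraph G k).Adj A B ↔
      ∃ a ∈ A.1, ∃ b ∉ A.1, G.Adj a b ∧ B.1 = insert b (A.1.erase a) := by
  constructor
  · rintro ⟨a, b, hab, h₁, h₂⟩
    have h₁ := Finset.ext_iff.1 h₁
    have h₂ := Finset.ext_iff.1 h₂
    simp only [mem_sdiff, mem_singleton] at h₁ h₂
    refine ⟨a, ((h₁ a).2 rfl).1, b, ((h₂ b).2 rfl).2, hab, ?_⟩
    ext x; simp only [mem_insert, mem_erase]; grind
  · rintro ⟨a, ha, b, hb, hab, hB⟩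
    exact ⟨a, b, hab, by rw [hB, sdiff_insert_erase ha hb], by rw [hB, insert_erase_sdiff hb]⟩

variable [Fintype V] [DecidableRel G.Adj]

theorem degree_tokenGraph (A : {s : Finset V // #s = k}) :
    (tokenGraph G k).degree A = ∑ a ∈ A.1, #(G.neighborFinset a \ A.1) := by
  rw [← card_sigma, ← card_neighborFinset_eq_degree]
  symm
  refine card_bij (fun ab hab => ⟨insert ab.2 (A.1.erase ab.1), ?_⟩) ?_ ?_ ?_
  · simp only [mem_sigma, mem_sdiff, mem_neighborFinset] at hab
    rw [card_insert_erase hab.1 hab.2.2, A.2]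
  · rintro ⟨a, b⟩ hab
    simp only [mem_sigma, mem_sdiff, mem_neighborFinset] at hab
    rw [mem_neighborFinset, tokenGraph_adj_iff]
    exact ⟨a, hab.1, b, hab.2.2, hab.2.1, rfl⟩
  · rintro ⟨a, b⟩ hab ⟨a', b'⟩ hab' h
    simp only [mem_sigma, mem_sdiff, mem_neighborFinset] at hab hab'
    have h : insert b (A.1.erase a) = insert b' (A.1.erase a') := congrArg Subtype.val h
    have ha := sdiff_insert_erase hab.1 hab.2.2
    rw [h, sdiff_insert_erase hab'.1 hab'.2.2, singleton_inj] at ha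
    have hb := insert_erase_sdiff (a := a) hab.2.2
    rw [h, insert_erase_sdiff hab'.2.2, singleton_inj] at hb
    subst ha hb; rfl
  · intro B hB
    rw [mem_neighborFinset, tokenGraph_adj_iff] at hB
    obtain ⟨a, ha, b, hb, hab, hB⟩ := hB
    exact ⟨⟨a, b⟩, by simp [ha, hb, hab], Subtype.ext hB.symm⟩

theorem card_neighborFinset_sdiff_pair (x y : V) :
    #(G.neighborFinset x \ {x, y}) = if G.Adj x y then G.degree x - 1 else G.degree x := by
  rw [sdiff_insert, erase_eq_of_notMem (by simp), sdiff_singleton_eq_erase, card_erase_eq_ite]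
  simp only [mem_neighborFinset, card_neighborFinset_eq_degree]

theorem degree_tokenGraph_pair {x y : V} (hxy : x ≠ y) :
    (tokenGraph G 2).degree ⟨{x, y}, card_pair hxy⟩ =
      if G.Adj x y then (G.degree x - 1) + (G.degree y - 1) else G.degree x + G.degree y := by
  rw [degree_tokenGraph]
  dsimp only
  rw [sum_pair hxy, card_neighborFinset_sdiff_pair, pair_comm,
    card_neighborFinset_sdiff_pair]
  simp only [G.adj_comm y x]
  split_ifs <;> rfl

end SimpleGraph

namespace completeBipartiteGraph

open SimpleGraph

variable {α β : Type*}

theorem isRegularOfDegree [Fintype α] [DecidableEq α] :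
    (completeBipartiteGraph α α).IsRegularOfDegree (Fintype.card α) := by
  intro v
  rw [← card_neighborFinset_eq_degree]
  rcases v with a | a
  · rw [show (completeBipartiteGraph α α).neighborFinset (.inl a) = univ.map .inr from by
      ext (w | w) <;> simp]
    simp
  · rw [show (completeBipartiteGraph α α).neighborFinset (.inr a) = univ.map .inl from by
      ext (w | w) <;> simp]
    simp

theorem even_card_filter_isLeft_pair_iff [DecidableEq α] [DecidableEq β] {x y : α ⊕ β}
    (hxy : x ≠ y) :
    Even #(({x, y} : Finset (α ⊕ β)).filter (·.isLeft)) ↔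
      ¬ (completeBipartiteGraph α β).Adj x y := by
  rcases x with a | a <;> rcases y with b | b <;> simp_all [filter_insert, filter_singleton]

theorem not_even_card_filter_isLeft_iff_of_tokenGraph_adj [DecidableEq α] [DecidableEq β] {k : ℕ}
    {A B : {s : Finset (α ⊕ β) // #s = k}}
    (h : (tokenGraph (completeBipartiteGraph α β) k).Adj A B) :
    ¬ Even #(B.1.filter (·.isLeft)) ↔ Even #(A.1.filter (·.isLeft)) := by
  obtain ⟨a, ha, b, hb, hab, hB⟩ := (tokenGraph_adj_iff _).1 h
  rw [hB, filter_insert, filter_erase]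
  rcases a with a | a <;> rcases b with b | b <;> simp only [completeBipartiteGraph_adj,
    Sum.isLeft_inl, Sum.isLeft_inr, Sum.isRight_inl, Sum.isRight_inr, Bool.false_eq_true,
    and_false, false_and, or_false, false_or, ↓reduceIte] at hab ⊢
  · rw [← Nat.even_add_one,
      card_erase_add_one (s := A.1.filter (·.isLeft)) (mem_filter.2 ⟨ha, rfl⟩)]
  · rw [erase_eq_of_notMem (by simp), card_insert_of_notMem (by simp [hb]),
      Nat.even_add_one, not_not]

theorem isBiregular_tokenGraph_two [Fintype α] [DecidableEq α] :
    (tokenGraph (completeBipartiteGraph α α) 2).IsBiregular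
      (fun A => Even #(A.1.filter (·.isLeft))) (2 * Fintype.card α) (2 * (Fintype.card α - 1)) where
  not_iff_of_adj _ _ := not_even_card_filter_isLeft_iff_of_tokenGraph_adj
  degree_of_pos := by
    rintro ⟨s, hs⟩ hA
    obtain ⟨x, y, hxy, rfl⟩ := card_eq_two.1 hs
    rw [degree_tokenGraph_pair _ hxy, if_neg ((even_card_filter_isLeft_pair_iff hxy).1 hA),
      isRegularOfDegree x,
      isRegularOfDegree y, two_mul]
  degree_of_neg := by
    rintro ⟨s, hs⟩ hA
    obtain ⟨x, y, hxy, rfl⟩ := card_eq_two.1 hs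
    rw [degree_tokenGraph_pair _ hxy,
      if_pos (not_not.1 ((even_card_filter_isLeft_pair_iff hxy).not.1 hA)), isRegularOfDegree x,
      isRegularOfDegree y, two_mul]

end completeBipartiteGraph

theorem two_token_complete_bipartite_spectral_radius (n : ℕ) :
    specRad ((tokenGraph (completeBipartiteGraph (Fin n) (Fin n)) 2).adjMatrix ℝ) =
      2 * Real.sqrt ((n : ℝ) * ((n : ℝ) - 1)) := by
  rcases n.eq_zero_or_pos with rfl | hn
  · have : IsEmpty {s : Finset (Fin 0 ⊕ Fin 0) // #s = 2} :=
      ⟨fun A => by simpa [Subsingleton.elim A.1 ∅] using A.2⟩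
    simp [specRad_of_isEmpty]
  · have : Nonempty {s : Finset (Fin n ⊕ Fin n) // #s = 2} :=
      ⟨⟨{.inl ⟨0, hn⟩, .inr ⟨0, hn⟩}, card_pair Sum.inl_ne_inr⟩⟩
    rw [completeBipartiteGraph.isBiregular_tokenGraph_two.specRad_adjMatrix, Fintype.card_fin,
      Nat.cast_mul, Nat.cast_mul, Nat.cast_sub hn, Nat.cast_one, Nat.cast_two,
      show 2 * (n : ℝ) * (2 * (n - 1)) = 2 ^ 2 * (n * (n - 1)) by ring,
      Real.sqrt_mul (by norm_num), Real.sqrt_sq zero_le_two]
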